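/- Let k be a commutative ring, R a commutative k-algebra, B an R-algebra, and N a (B,R)-dimodule. The map η_{B,N} : Der_k(B,N) → Der_k(R, Cent_k(B,N)), defined by (η_{B,N}(d)(r))(b) = d(rb) − r·d(b), is a well-defined k-linear map (i.e., η_{B,N}(d) satisfies the derivation identity η(d)(r₁r₂) = η(d)(r₁)·r₂ + r₁·η(d)(r₂) in Cent_k(B,N)), and its kernel is exactly Der_R(B,N): a k-linear derivation d : B → N satisfies η_{B,N}(d) = 0 if and only if d is R-linear. -/

import Mathlib

/-- The `k`-submodule `Der_k(B,N)` of `Hom_k(B,N)`: `k`-linear derivations of the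
`R`-algebra `B` (multiplication `mulB`) with values in the `(B,R)`-dimodule `N`. -/
def derkSubmodule {k R B N : Type*} [CommRing k] [CommRing R] [Algebra k R]
    [AddCommGroup B] [Module k B] [Module R B] [IsScalarTower k R B]
    [AddCommGroup N] [Module k N] [Module R N] [IsScalarTower k R N]
    (mulB : B →ₗ[R] B →ₗ[R] B)
    (lactN : B →ₗ[R] N →ₗ[R] N) (ractN : N →ₗ[R] B →ₗ[R] N) :
    Submodule k (B →ₗ[k] N) where
  carrier := {d | ∀ b₁ b₂ : B, d (mulB b₁ b₂) = ractN (d b₁) b₂ + lactN b₁ (d b₂)}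
  add_mem' := by
    intro f g hf hg b₁ b₂
    simp only [LinearMap.add_apply, hf b₁ b₂, hg b₁ b₂, map_add, LinearMap.add_apply]
    abel
  zero_mem' := by intro b₁ b₂; simp
  smul_mem' := by
    intro c f hf b₁ b₂
    simp only [LinearMap.smul_apply, hf b₁ b₂, smul_add,
      LinearMap.map_smul_of_tower, LinearMap.smul_apply]

/-- The `k`-submodule `Der_k(R, Cent_k(B,N))` of `Hom_k(R, Hom_k(B,N))`: `k`-linear
maps `D` on `R` whose values are centroidal transformations and which satisfy the
Leibniz rule `D(r₁r₂) = D(r₁)·r₂ + r₁·D(r₂)` for the `R`-bimodule structure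
`(r·χ)(b) = r • χ(b)`, `(χ·r)(b) = χ(r • b)` of the centroid. -/
def derRCentSubmodule {k R B N : Type*} [CommRing k] [CommRing R] [Algebra k R]
    [AddCommGroup B] [Module k B] [Module R B] [IsScalarTower k R B]
    [AddCommGroup N] [Module k N] [Module R N] [IsScalarTower k R N]
    (mulB : B →ₗ[R] B →ₗ[R] B)
    (lactN : B →ₗ[R] N →ₗ[R] N) (ractN : N →ₗ[R] B →ₗ[R] N) :
    Submodule k (R →ₗ[k] (B →ₗ[k] N)) where
  carrier := {D |
    (∀ (r : R) (b₁ b₂ : B),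
      D r (mulB b₁ b₂) = ractN (D r b₁) b₂ ∧ D r (mulB b₁ b₂) = lactN b₁ (D r b₂)) ∧
    (∀ (r₁ r₂ : R) (b : B),
      D (r₁ * r₂) b = D r₁ (r₂ • b) + r₁ • D r₂ b)}
  add_mem' := by
    intro f g hf hg
    refine ⟨fun r b₁ b₂ => ?_, fun r₁ r₂ b => ?_⟩
    · constructor
      · simp only [LinearMap.add_apply, (hf.1 r b₁ b₂).1, (hg.1 r b₁ b₂).1, map_add,
          LinearMap.add_apply]
      · simp only [LinearMap.add_apply, (hf.1 r b₁ b₂).2, (hg.1 r b₁ b₂).2, map_add]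
    · simp only [LinearMap.add_apply, hf.2 r₁ r₂ b, hg.2 r₁ r₂ b, smul_add]
      abel
  zero_mem' := by
    refine ⟨fun r b₁ b₂ => ?_, fun r₁ r₂ b => ?_⟩ <;> simp
  smul_mem' := by
    intro c f hf
    refine ⟨fun r b₁ b₂ => ?_, fun r₁ r₂ b => ?_⟩
    · constructor
      · simp only [LinearMap.smul_apply, (hf.1 r b₁ b₂).1,
          LinearMap.map_smul_of_tower, LinearMap.smul_apply]
      · simp only [LinearMap.smul_apply, (hf.1 r b₁ b₂).2, LinearMap.map_smul_of_tower]
    · simp only [LinearMap.smul_apply, hf.2 r₁ r₂ b, smul_add, smul_comm c r₁]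

section SmulDefect

variable {k R B N : Type*} [CommRing k] [CommRing R] [Algebra k R]
    [AddCommGroup B] [Module k B] [Module R B] [IsScalarTower k R B]
    [AddCommGroup N] [Module k N] [Module R N] [IsScalarTower k R N]

/-- The paper's `η_{B,N}(d)`. -/
def smulDefect (d : B →ₗ[k] N) : R →ₗ[k] B →ₗ[k] N :=
  LinearMap.mk₂ k (fun r b => d (r • b) - r • d b)
    (fun r₁ r₂ b => by simp only [add_smul, map_add]; abel)
    (fun c r b => by simp only [smul_assoc, LinearMap.map_smul_of_tower, smul_sub])
    (fun r b₁ b₂ => by simp only [smul_add, map_add]; abel)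
    (fun c r b => by simp only [smul_comm r c, LinearMap.map_smul_of_tower, smul_sub])

@[simp]
theorem smulDefect_apply (d : B →ₗ[k] N) (r : R) (b : B) :
    smulDefect d r b = d (r • b) - r • d b :=
  rfl

def smulDefectₗ : (B →ₗ[k] N) →ₗ[k] R →ₗ[k] B →ₗ[k] N where
  toFun := smulDefect
  map_add' d₁ d₂ := by
    ext r b
    simp only [smulDefect_apply, LinearMap.add_apply, smul_add]
    abel
  map_smul' c d := by
    ext r b
    simp only [smulDefect_apply, LinearMap.smul_apply, RingHom.id_apply, smul_sub,
      smul_comm r c]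

theorem smulDefect_mul (d : B →ₗ[k] N) (r₁ r₂ : R) (b : B) :
    smulDefect d (r₁ * r₂) b = smulDefect d r₁ (r₂ • b) + r₁ • smulDefect d r₂ b := by
  simp only [smulDefect_apply, mul_smul, smul_sub]
  abel

theorem smulDefect_eq_zero_iff (d : B →ₗ[k] N) :
    smulDefect (R := R) d = 0 ↔ ∀ (r : R) (b : B), d (r • b) = r • d b := by
  simp only [LinearMap.ext_iff, smulDefect_apply, LinearMap.zero_apply, sub_eq_zero]

variable {mulB : B →ₗ[R] B →ₗ[R] B} {lactN : B →ₗ[R] N →ₗ[R] N}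
  {ractN : N →ₗ[R] B →ₗ[R] N} {d : B →ₗ[k] N}

-- As `mulB` is `R`-bilinear, `r • mulB b₁ b₂` may put `r` on either factor before the
-- Leibniz rule is applied; the actions are `R`-bilinear too, so the extra terms cancel.
theorem smulDefect_map_mul_eq_ractN (hd : d ∈ derkSubmodule mulB lactN ractN)
    (r : R) (b₁ b₂ : B) :
    smulDefect d r (mulB b₁ b₂) = ractN (smulDefect d r b₁) b₂ := by
  rw [smulDefect_apply, ← LinearMap.map_smul₂, hd, hd]
  simp only [smulDefect_apply, map_sub, LinearMap.sub_apply, map_smul, LinearMap.smul_apply,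
    smul_add]
  abel

theorem smulDefect_map_mul_eq_lactN (hd : d ∈ derkSubmodule mulB lactN ractN)
    (r : R) (b₁ b₂ : B) :
    smulDefect d r (mulB b₁ b₂) = lactN b₁ (smulDefect d r b₂) := by
  rw [smulDefect_apply, ← map_smul, hd, hd]
  simp only [smulDefect_apply, map_sub, map_smul, smul_add]
  abel

theorem smulDefect_mem_derRCentSubmodule (hd : d ∈ derkSubmodule mulB lactN ractN) :
    smulDefect d ∈ derRCentSubmodule mulB lactN ractN :=
  ⟨fun r b₁ b₂ =>
    ⟨smulDefect_map_mul_eq_ractN hd r b₁ b₂, smulDefect_map_mul_eq_lactN hd r b₁ b₂⟩,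
    smulDefect_mul d⟩

end SmulDefect

/-- Let `R` be a commutative `k`-algebra, `B` an `R`-algebra and
`N` a `(B,R)`-dimodule.  The map `η_{B,N} : Der_k(B,N) → Der_k(R, Cent_k(B,N))`
determined by `(η(d)(r))(b) = d(r • b) − r • d(b)` is a well-defined `k`-linear map
whose kernel is exactly `Der_R(B,N)`: `η(d) = 0` iff `d` is `R`-linear. -/
theorem stmt_10 {k R B N : Type*} [CommRing k] [CommRing R] [Algebra k R]
    [AddCommGroup B] [Module k B] [Module R B] [IsScalarTower k R B]
    [AddCommGroup N] [Module k N] [Module R N] [IsScalarTower k R N]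
    (mulB : B →ₗ[R] B →ₗ[R] B)
    (lactN : B →ₗ[R] N →ₗ[R] N) (ractN : N →ₗ[R] B →ₗ[R] N) :
    ∃ η : ↥(derkSubmodule (k := k) mulB lactN ractN) →ₗ[k]
        ↥(derRCentSubmodule (k := k) mulB lactN ractN),
      (∀ (d : ↥(derkSubmodule (k := k) mulB lactN ractN)) (r : R) (b : B),
        ((η d).1 r) b =
          d.1 (r • b) - r • d.1 b) ∧
      (∀ d : ↥(derkSubmodule (k := k) mulB lactN ractN),
        (η d).1 = 0 ↔ ∀ (r : R) (b : B),
          d.1 (r • b) = r • d.1 b) :=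
  ⟨smulDefectₗ.restrict fun _ hd => smulDefect_mem_derRCentSubmodule hd,
    fun _ _ _ => rfl, fun d => smulDefect_eq_zero_iff d.1⟩
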